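/- arXiv:2302.04744 — 5 statements merged into one kernel-verified Lean document; each statement's English description precedes it below -/
import Mathlib

section
/- The send operation on the network model preserves observational equivalence of networks when the sender is a correct server: if Δ ~ Δ' then send(Δ, m, s) ~ send(Δ', m, s). -/
/-- Local view of the network at one server. -/
structure NetState (Msg : Type*) where
  sent : List Msg
  received : List Msg
  pending : Multiset Msg

variable {Server Msg : Type*}

/-- `send Δ m s`: server `s` sends `m`; `m` is appended to `s`'s `sent` list and added
to the `pending` multiset of every server. -/
def send [DecidableEq Server] (Δ : Server → NetState Msg) (m : Msg) (s : Server) :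
    Server → NetState Msg := fun s' =>
  if s' = s then ⟨(Δ s').sent ++ [m], (Δ s').received, (Δ s').pending + {m}⟩
  else ⟨(Δ s').sent, (Δ s').received, (Δ s').pending + {m}⟩

/-- `receive Δ m s`: server `s` receives `m`; one copy of `m` is removed from `s`'s
`pending` multiset and `m` is appended to `s`'s `received` list. -/
def receive [DecidableEq Server] [DecidableEq Msg]
    (Δ : Server → NetState Msg) (m : Msg) (s : Server) :
    Server → NetState Msg := fun s' =>
  if s' = s then ⟨(Δ s').sent, (Δ s').received ++ [m], (Δ s').pending.erase m⟩
  else Δ s'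

/-- Observational equivalence between a network `Δ` with Byzantine server set `𝔹` and a
network `Δ'` in which the single nondeterministic process `b` plays the role of all
Byzantine servers. -/
def NetObsEq [DecidableEq Server] (𝔹 : Finset Server) (b : Server)
    (Δ Δ' : Server → NetState Msg) : Prop :=
  -- (1) they agree on all correct servers
  (∀ s, s ∉ 𝔹 → s ≠ b → Δ s = Δ' s) ∧
  -- (2) a message is sent by `b` iff it is sent by some Byzantine process
  (∑ s ∈ 𝔹, ((Δ s).sent : Multiset Msg)) = ((Δ' b).sent : Multiset Msg) ∧
  -- (3) all pending messages of `b` are pending at every Byzantine process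
  (∀ s ∈ 𝔹, (Δ' b).pending ≤ (Δ s).pending) ∧
  -- (4) messages received by `b` were received by some Byzantine process
  ((Δ' b).received : Multiset Msg) ≤ ∑ s ∈ 𝔹, ((Δ s).received : Multiset Msg) ∧
  -- (5) messages sent to a Byzantine process were also sent to `b`
  (∀ s ∈ 𝔹, ((Δ s).received : Multiset Msg) + (Δ s).pending
      = ((Δ' b).received : Multiset Msg) + (Δ' b).pending) ∧
  -- (6) messages received by a Byzantine process were received by `b`
  (∀ s ∈ 𝔹, ((Δ s).received : Multiset Msg) ≤ ((Δ' b).received : Multiset Msg))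

/-- `send` at a correct server preserves observational equivalence of networks. -/
theorem send_preserves_netObsEq [DecidableEq Server]
    (𝔹 : Finset Server) (b : Server) (Δ Δ' : Server → NetState Msg)
    (m : Msg) (s : Server) (hs𝔹 : s ∉ 𝔹) (hsb : s ≠ b)
    (heq : NetObsEq 𝔹 b Δ Δ') :
    NetObsEq 𝔹 b (send Δ m s) (send Δ' m s) := by
  obtain ⟨h1, h2, h3, h4, h5, h6⟩ := heq
  have hb : b ≠ s := fun h => hsb h.symm
  have hB : ∀ t ∈ 𝔹, t ≠ s := by
    intro t ht h; exact hs𝔹 (h ▸ ht)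
  refine ⟨?_, ?_, ?_, ?_, ?_, ?_⟩
  · intro t ht htb
    simp only [send]
    rw [h1 t ht htb]
  · simp only [send, if_neg hb]
    rw [← h2]
    refine Finset.sum_congr rfl fun t ht => ?_
    rw [if_neg (hB t ht)]
  · intro t ht
    simp only [send, if_neg hb, if_neg (hB t ht)]
    exact add_le_add_left (h3 t ht) _
  · simp only [send, if_neg hb]
    calc ((Δ' b).received : Multiset Msg) ≤ _ := h4
      _ = _ := by
        refine Finset.sum_congr rfl fun t ht => ?_
        rw [if_neg (hB t ht)]
  · intro t ht
    simp only [send, if_neg hb, if_neg (hB t ht)]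
    rw [← add_assoc, h5 t ht, add_assoc]
  · intro t ht
    simp only [send, if_neg hb, if_neg (hB t ht)]
    exact h6 t ht
end

section
/- The receive operation preserves observational equivalence when performed at a correct server: if Δ ~ Δ' and a correct server s receives message m in both, then receive(Δ,m,s) ~ receive(Δ',m,s). -/
variable {Server Msg : Type*}

section Receive

variable [DecidableEq Server] [DecidableEq Msg] {Δ Δ' : Server → NetState Msg} {m : Msg}
  {s t : Server}

theorem receive_apply_of_ne (Δ : Server → NetState Msg) (m : Msg) (h : t ≠ s) :
    receive Δ m s t = Δ t :=
  if_neg h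

theorem receive_apply_congr (h : Δ t = Δ' t) : receive Δ m s t = receive Δ' m s t := by
  simp only [receive, h]

end Receive

theorem NetObsEq.of_eqOn_byzantine [DecidableEq Server] {𝔹 : Finset Server} {b : Server}
    {Δ Δ' Γ Γ' : Server → NetState Msg} (h : NetObsEq 𝔹 b Δ Δ')
    (hcorrect : ∀ t, t ∉ 𝔹 → t ≠ b → Γ t = Γ' t) (hΓ : Set.EqOn Γ Δ 𝔹) (hb : Γ' b = Δ' b) :
    NetObsEq 𝔹 b Γ Γ' := by
  obtain ⟨-, hsent, hpending, hreceived, hsentTo, hreceivedBy⟩ := h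
  have hsum (f : NetState Msg → Multiset Msg) : ∑ t ∈ 𝔹, f (Γ t) = ∑ t ∈ 𝔹, f (Δ t) :=
    Finset.sum_congr rfl fun t ht => congrArg f (hΓ ht)
  rw [NetObsEq, hb]
  exact ⟨hcorrect, (hsum fun x => (x.sent : Multiset Msg)).trans hsent,
    fun t ht => hΓ ht ▸ hpending t ht,
    hreceived.trans_eq (hsum fun x => (x.received : Multiset Msg)).symm,
    fun t ht => hΓ ht ▸ hsentTo t ht, fun t ht => hΓ ht ▸ hreceivedBy t ht⟩

theorem receive_correct_preserves_netObsEq_general [DecidableEq Server] [DecidableEq Msg]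
    (𝔹 : Finset Server) (b : Server) (Δ Δ' : Server → NetState Msg)
    (m : Msg) (s : Server) (hs𝔹 : s ∉ 𝔹) (hsb : s ≠ b)
    (heq : NetObsEq 𝔹 b Δ Δ') :
    NetObsEq 𝔹 b (receive Δ m s) (receive Δ' m s) :=
  heq.of_eqOn_byzantine (fun t ht𝔹 htb => receive_apply_congr (heq.1 t ht𝔹 htb))
    (fun _ ht => receive_apply_of_ne Δ m (ne_of_mem_of_not_mem ht hs𝔹))
    (receive_apply_of_ne Δ' m hsb.symm)

/-- `receive` at a correct server preserves observational equivalence of networks. -/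
theorem receive_correct_preserves_netObsEq [DecidableEq Server] [DecidableEq Msg]
    (𝔹 : Finset Server) (b : Server) (Δ Δ' : Server → NetState Msg)
    (m : Msg) (s : Server) (hs𝔹 : s ∉ 𝔹) (hsb : s ≠ b)
    (hm : m ∈ (Δ s).pending) (hm' : m ∈ (Δ' s).pending)
    (heq : NetObsEq 𝔹 b Δ Δ') :
    NetObsEq 𝔹 b (receive Δ m s) (receive Δ' m s) :=
  receive_correct_preserves_netObsEq_general 𝔹 b Δ Δ' m s hs𝔹 hsb heq
end

section
/- If Δ ~ Δ', s is Byzantine, m is pending at s in Δ and pending at b in Δ', then receive(Δ,m,s) ~ receive(Δ',m,b). -/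
variable {Server Msg : Type*}

lemma coe_append_singleton {α : Type*} (l : List α) (a : α) :
    ((l ++ [a] : List α) : Multiset α) = (l : Multiset α) + {a} := rfl

/-- If a Byzantine server `s` receives `m` (pending at `s`) while `b` receives the same
message `m` (pending at `b`), observational equivalence is preserved. -/
theorem receive_byz_preserves_netObsEq [DecidableEq Server] [DecidableEq Msg]
    (𝔹 : Finset Server) (b : Server) (Δ Δ' : Server → NetState Msg)
    (m : Msg) (s : Server) (hs : s ∈ 𝔹)
    (hm : m ∈ (Δ s).pending) (hm' : m ∈ (Δ' b).pending)
    (heq : NetObsEq 𝔹 b Δ Δ') :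
    NetObsEq 𝔹 b (receive Δ m s) (receive Δ' m b) := by
  obtain ⟨h1, h2, h3, h4, h5, h6⟩ := heq
  have hsb : s ≠ b ∨ s = b := (ne_or_eq s b)
  refine ⟨?_, ?_, ?_, ?_, ?_, ?_⟩
  · intro t ht htb
    have hts : t ≠ s := fun h => ht (h ▸ hs)
    simp [receive, hts, htb, h1 t ht htb]
  · have : ∀ t, ((receive Δ m s t).sent : Multiset Msg) = ((Δ t).sent : Multiset Msg) := by
      intro t; by_cases h : t = s <;> simp [receive, h]
    simp only [this]
    have : ((receive Δ' m b b).sent : Multiset Msg) = ((Δ' b).sent : Multiset Msg) := by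
      simp [receive]
    rw [this]; exact h2
  · intro t ht
    have hb : (receive Δ' m b b).pending = (Δ' b).pending.erase m := by simp [receive]
    rw [hb]
    by_cases h : t = s
    · subst h
      simp only [receive, eq_self_iff_true, if_true]
      exact Multiset.erase_le_erase m (h3 t ht)
    · simp only [receive, if_neg h]
      exact le_trans (Multiset.erase_le m _) (h3 t ht)
  · have hb : ((receive Δ' m b b).received : Multiset Msg)
        = ((Δ' b).received : Multiset Msg) + {m} := by
      simp only [receive, eq_self_iff_true, if_true]; exact coe_append_singleton _ _
    rw [hb]
    have hsum : ∑ t ∈ 𝔹, ((receive Δ m s t).received : Multiset Msg)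
        = (∑ t ∈ 𝔹, ((Δ t).received : Multiset Msg)) + {m} := by
      rw [← Finset.sum_erase_add _ _ hs, ← Finset.sum_erase_add _ _ hs]
      have h1' : ∀ t ∈ 𝔹.erase s, ((receive Δ m s t).received : Multiset Msg)
          = ((Δ t).received : Multiset Msg) := by
        intro t ht
        simp [receive, Finset.ne_of_mem_erase ht]
      rw [Finset.sum_congr rfl h1']
      have : ((receive Δ m s s).received : Multiset Msg)
          = ((Δ s).received : Multiset Msg) + {m} := by
        simp only [receive, eq_self_iff_true, if_true]; exact coe_append_singleton _ _
      rw [this, add_assoc]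
    rw [hsum]
    exact add_le_add_left h4 _
  · intro t ht
    have hb1 : ((receive Δ' m b b).received : Multiset Msg) + (receive Δ' m b b).pending
        = ((Δ' b).received : Multiset Msg) + (Δ' b).pending := by
      simp only [receive, eq_self_iff_true, if_true]
      rw [coe_append_singleton, add_assoc, Multiset.singleton_add, Multiset.cons_erase hm']
    rw [hb1]
    by_cases h : t = s
    · subst h
      simp only [receive, eq_self_iff_true, if_true]
      rw [coe_append_singleton, add_assoc, Multiset.singleton_add, Multiset.cons_erase hm]
      exact h5 t ht
    · simp only [receive, if_neg h]
      exact h5 t ht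
  · intro t ht
    have hb : ((receive Δ' m b b).received : Multiset Msg)
        = ((Δ' b).received : Multiset Msg) + {m} := by
      simp only [receive, eq_self_iff_true, if_true]; exact coe_append_singleton _ _
    rw [hb]
    by_cases h : t = s
    · subst h
      simp only [receive, eq_self_iff_true, if_true]
      rw [coe_append_singleton]
      exact add_le_add_left (h6 t ht) _
    · simp only [receive, if_neg h]
      exact le_trans (h6 t ht) (Multiset.le_add_right _ _)
end

section
/- If Δ ~ Δ', s is Byzantine, m ∈ Δ(s).pending, and b has received m strictly more times than s has (count of m in Δ'(b).received > count in Δ(s).received), then receive(Δ,m,s) ~ Δ'. -/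
variable {Server Msg : Type*}

/-!
Receiving moves one copy of `m` at `s` from `pending` to `received`, which leaves clauses
(1), (2) and (5) intact and only enlarges the right-hand side of (4). Clauses (3) and (6) at `s` need
`b` to hold one more copy of `m` than `s` has received and one fewer copy pending; the first is
`hcount`, and counting `m` in clause (5) at `s` turns it into the second.
-/

namespace Multiset

variable {α : Type*} [DecidableEq α] {a : α} {s t : Multiset α}

theorem le_erase_of_count_lt (h : s ≤ t) (hc : count a s < count a t) : s ≤ t.erase a := by
  refine le_iff_count.2 fun x => ?_
  obtain rfl | hx := eq_or_ne x a
  · rw [count_erase_self]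
    omega
  · rw [count_erase_of_ne hx]
    exact count_le_of_le x h

theorem cons_le_of_count_lt (h : s ≤ t) (hc : count a s < count a t) : a ::ₘ s ≤ t := by
  have ha : a ∈ t := count_pos.1 (Nat.zero_lt_of_lt hc)
  rw [← cons_erase ha, cons_le_cons_iff]
  exact le_erase_of_count_lt h hc

end Multiset

section receive

variable [DecidableEq Server] [DecidableEq Msg] (Δ : Server → NetState Msg) (m : Msg) (s : Server)

theorem receive_self :
    receive Δ m s s = ⟨(Δ s).sent, (Δ s).received ++ [m], (Δ s).pending.erase m⟩ :=
  if_pos rfl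

theorem receive_of_ne {t : Server} (h : t ≠ s) : receive Δ m s t = Δ t :=
  if_neg h

theorem sent_receive (t : Server) : (receive Δ m s t).sent = (Δ t).sent := by
  unfold receive
  split <;> rfl

theorem coe_received_receive_self :
    ((receive Δ m s s).received : Multiset Msg) = m ::ₘ (Δ s).received := by
  rw [receive_self, Multiset.cons_coe, Multiset.coe_eq_coe]
  exact List.perm_append_singleton m _

theorem received_le_received_receive (t : Server) :
    ((Δ t).received : Multiset Msg) ≤ (receive Δ m s t).received := by
  obtain rfl | h := eq_or_ne t s
  · rw [coe_received_receive_self]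
    exact Multiset.le_cons_self _ m
  · rw [receive_of_ne Δ m s h]

variable {Δ m s}

theorem received_add_pending_receive (hm : m ∈ (Δ s).pending) (t : Server) :
    ((receive Δ m s t).received : Multiset Msg) + (receive Δ m s t).pending
      = ((Δ t).received : Multiset Msg) + (Δ t).pending := by
  obtain rfl | h := eq_or_ne t s
  · rw [coe_received_receive_self, receive_self, Multiset.cons_add, ← Multiset.add_cons,
      Multiset.cons_erase hm]
  · rw [receive_of_ne Δ m s h]

end receive

/-- If a Byzantine server `s` receives a pending message `m` that `b` has already
received strictly more times than `s`, the resulting network is still observationally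
equivalent to the unmodified `Δ'`. -/
theorem receive_byz_already_received_netObsEq [DecidableEq Server] [DecidableEq Msg]
    (𝔹 : Finset Server) (b : Server) (Δ Δ' : Server → NetState Msg)
    (m : Msg) (s : Server) (hs : s ∈ 𝔹)
    (hm : m ∈ (Δ s).pending)
    (hcount : (Δ s).received.count m < (Δ' b).received.count m)
    (heq : NetObsEq 𝔹 b Δ Δ') :
    NetObsEq 𝔹 b (receive Δ m s) Δ' := by
  obtain ⟨hcorrect, hsent, hpending, hreceived, hdelivered, hreceived_byz⟩ := heq
  rw [← Multiset.coe_count, ← Multiset.coe_count] at hcount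
  have hpending_count : (Δ' b).pending.count m < (Δ s).pending.count m := by
    have := congrArg (Multiset.count m) (hdelivered s hs)
    rw [Multiset.count_add, Multiset.count_add] at this
    omega
  refine ⟨fun t ht hb => ?_, by simpa only [sent_receive] using hsent, fun t ht => ?_,
    hreceived.trans (Finset.sum_le_sum fun t _ => received_le_received_receive Δ m s t),
    fun t ht => (received_add_pending_receive hm t).trans (hdelivered t ht), fun t ht => ?_⟩
  · rw [receive_of_ne Δ m s (ne_of_mem_of_not_mem hs ht).symm]
    exact hcorrect t ht hb
  · obtain rfl | hts := eq_or_ne t s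
    · rw [receive_self]
      exact Multiset.le_erase_of_count_lt (hpending t ht) hpending_count
    · rw [receive_of_ne Δ m s hts]
      exact hpending t ht
  · obtain rfl | hts := eq_or_ne t s
    · rw [coe_received_receive_self]
      exact Multiset.cons_le_of_count_lt (hreceived_byz t ht) hcount
    · rw [receive_of_ne Δ m s hts]
      exact hreceived_byz t ht
end

section
/- The history map agreement property follows from the three liveness properties: if Add-Get-Local, Get-Global, and Eventual-Get hold for a Setchain, then Get-After-Add holds: for every add(e) performed at a correct server, eventually all gets at every correct server return a history containing e. -/
/-- `getS v t` is the set component and `getH v t` the set of elements appearing in the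
history component returned by a `get` on server `v` at time `t`; `addAt v e t` means that
`add(e)` is invoked on server `v` at time `t`. -/
theorem get_after_add_of_liveness
    {Server α : Type*}
    (correct : Server → Prop)
    (addAt : Server → α → ℕ → Prop)
    (getS getH : Server → ℕ → Set α)
    -- Add-Get-Local:
    (hAGL : ∀ v e t, correct v → addAt v e t →
      ∃ t', ∀ t'' ≥ t', e ∈ getS v t'')
    -- Get-Global:
    (hGG : ∀ v w e t, correct v → correct w → e ∈ getS v t →
      ∃ t', ∀ t'' ≥ t', e ∈ getS w t'')
    -- Eventual-Get:
    (hEG : ∀ v e t, correct v → e ∈ getS v t →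
      ∃ t', ∀ t'' ≥ t', e ∈ getH v t'') :
    -- Get-After-Add:
    ∀ v e t, correct v → addAt v e t →
      ∀ w, correct w → ∃ t', ∀ t'' ≥ t', e ∈ getH w t'' := by
  intro v e t hv hadd w hw
  obtain ⟨tv, he_getS_v⟩ := hAGL v e t hv hadd
  obtain ⟨tw, he_getS_w⟩ := hGG v w e tv hv hw (he_getS_v tv le_rfl)
  exact hEG w e tw hw (he_getS_w tw le_rfl)
end
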